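/- arXiv:0707.2025 — 3 statements merged into one kernel-verified Lean document; each statement's English description precedes it below -/
import Mathlib

section
/- For d ≥ 1 and any constant c ≥ 0, the partial sums ∑_{m=0}^{N} C(d+m-1, d-1) · (c + π(m + d/2))^{-d} grow like log N; more precisely there exist constants 0 < c₁ ≤ c₂ such that for all N ≥ 2, c₁ log N ≤ ∑_{m=0}^{N} C(d+m-1,d-1)(c+π(m+d/2))^{-d} ≤ c₂ log N. -/
/-!
Writing `d = k + 1`, the `m`-th summand is `C(k+m, k) / P_m^(k+1)` with `P_m = c + π(m + (k+1)/2)`.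
Both `C(k+m, k)` and `P_m^(k+1)` are comparable to powers of `m + 1` (of exponents `k` and `k + 1`),
so the summand is comparable to `1 / (m + 1)`, and the partial sums to the harmonic numbers,
which grow like `log N`.
-/

open Finset

lemma sum_range_inv_succ_eq_harmonic (n : ℕ) :
    ∑ m ∈ range n, ((m : ℝ) + 1)⁻¹ = harmonic n := by
  simp [harmonic]

lemma log_le_harmonic_succ (N : ℕ) : Real.log N ≤ harmonic (N + 1) := by
  rcases N.eq_zero_or_pos with rfl | hN
  · simp
  · calc Real.log N ≤ Real.log ((N + 1 + 1 : ℕ) : ℝ) :=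
          Real.log_le_log (by positivity) (by push_cast; linarith)
      _ ≤ harmonic (N + 1) := log_add_one_le_harmonic (N + 1)

lemma harmonic_succ_le_mul_log {N : ℕ} (hN : 2 ≤ N) :
    (harmonic (N + 1) : ℝ) ≤ (1 / Real.log 2 + 2) * Real.log N := by
  have hN' : (2 : ℝ) ≤ N := by exact_mod_cast hN
  have hlog2 : 0 < Real.log 2 := Real.log_pos one_lt_two
  have hlog_succ : Real.log ((N + 1 : ℕ) : ℝ) ≤ 2 * Real.log N := by
    calc Real.log ((N + 1 : ℕ) : ℝ) ≤ Real.log ((N : ℝ) ^ 2) :=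
          Real.log_le_log (by positivity) (by push_cast; nlinarith)
      _ = 2 * Real.log N := by rw [Real.log_pow]; norm_num
  have hone : 1 ≤ 1 / Real.log 2 * Real.log N := by
    rw [one_div_mul_eq_div, le_div_iff₀ hlog2, one_mul]
    exact Real.log_le_log two_pos hN'
  linarith [harmonic_le_one_add_log (N + 1)]

theorem exists_log_bounds_of_inv_succ_bounds {a : ℕ → ℝ} {K K' : ℝ} (hK : 0 < K)
    (hlo : ∀ m : ℕ, K / (m + 1) ≤ a m) (hhi : ∀ m : ℕ, a m ≤ K' / (m + 1)) :
    ∃ c₁ c₂ : ℝ, 0 < c₁ ∧ c₁ ≤ c₂ ∧ ∀ N : ℕ, 2 ≤ N →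
      c₁ * Real.log N ≤ ∑ m ∈ range (N + 1), a m ∧
        ∑ m ∈ range (N + 1), a m ≤ c₂ * Real.log N := by
  have hKK' : K ≤ K' := by simpa using (hlo 0).trans (hhi 0)
  have hlog2 : 0 < Real.log 2 := Real.log_pos one_lt_two
  refine ⟨K, K' * (1 / Real.log 2 + 2), hK, ?_, fun N hN => ⟨?_, ?_⟩⟩
  · nlinarith [one_div_pos.mpr hlog2]
  · calc K * Real.log N ≤ K * harmonic (N + 1) := by gcongr; exact log_le_harmonic_succ N
      _ = ∑ m ∈ range (N + 1), K / (m + 1) := by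
        simp only [div_eq_mul_inv, ← mul_sum, sum_range_inv_succ_eq_harmonic]
      _ ≤ ∑ m ∈ range (N + 1), a m := sum_le_sum fun m _ => hlo m
  · calc ∑ m ∈ range (N + 1), a m ≤ ∑ m ∈ range (N + 1), K' / (m + 1) :=
          sum_le_sum fun m _ => hhi m
      _ = K' * harmonic (N + 1) := by
        simp only [div_eq_mul_inv, ← mul_sum, sum_range_inv_succ_eq_harmonic]
      _ ≤ K' * ((1 / Real.log 2 + 2) * Real.log N) := by
        gcongr
        · linarith
        · exact harmonic_succ_le_mul_log hN
      _ = _ := by ring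

open Nat in
lemma inv_succ_mul_le_choose_mul_inv_pow (k m : ℕ) {A P : ℝ} (hP : 0 < P)
    (hPA : P ≤ A * (m + 1)) :
    ((k ! : ℝ) * A ^ (k + 1))⁻¹ / (m + 1) ≤ ((k + m).choose k : ℝ) * (P ^ (k + 1))⁻¹ := by
  have hm : (0 : ℝ) < m + 1 := by positivity
  have hA : 0 < A := (mul_pos_iff_of_pos_right hm).mp (hP.trans_le hPA)
  have hchoose : ((m : ℝ) + 1) ^ k / k ! ≤ (k + m).choose k := by
    have := Nat.pow_le_choose (α := ℝ) k (k + m)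
    rwa [show k + m + 1 - k = m + 1 by omega, Nat.cast_add_one] at this
  calc ((k ! : ℝ) * A ^ (k + 1))⁻¹ / (m + 1)
      = ((m : ℝ) + 1) ^ k / k ! * ((A * (m + 1)) ^ (k + 1))⁻¹ := by
        rw [mul_pow, pow_succ ((m : ℝ) + 1)]
        field_simp
    _ ≤ ((k + m).choose k : ℝ) * (P ^ (k + 1))⁻¹ := by gcongr

lemma choose_mul_inv_pow_le_inv_succ (k m : ℕ) {B P : ℝ} (hB : 0 < B)
    (hBP : B * (m + 1) ≤ P) :
    ((k + m).choose k : ℝ) * (P ^ (k + 1))⁻¹ ≤ (k + 1) ^ k / B ^ (k + 1) / (m + 1) := by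
  have hP : 0 < P := (by positivity : 0 < B * (m + 1)).trans_le hBP
  have hchoose : ((k + m).choose k : ℝ) ≤ ((k + 1) * (m + 1)) ^ k := by
    calc ((k + m).choose k : ℝ) ≤ ((k + m : ℕ) : ℝ) ^ k := by
          exact_mod_cast Nat.choose_le_pow (k + m) k
      _ ≤ ((k + 1) * (m + 1)) ^ k := by
          gcongr
          push_cast
          nlinarith [(k.cast_nonneg : (0 : ℝ) ≤ k), (m.cast_nonneg : (0 : ℝ) ≤ m)]
  calc ((k + m).choose k : ℝ) * (P ^ (k + 1))⁻¹
      ≤ ((k + 1) * (m + 1)) ^ k * ((B * (m + 1)) ^ (k + 1))⁻¹ := by gcongr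
    _ = (k + 1) ^ k / B ^ (k + 1) / (m + 1) := by
        rw [mul_pow, mul_pow, pow_succ ((m : ℝ) + 1)]
        field_simp

section Denominator

variable {c : ℝ} (hc : 0 ≤ c) (k m : ℕ)
include hc

lemma pi_div_two_mul_succ_le_add_pi_mul :
    Real.pi / 2 * (m + 1) ≤ c + Real.pi * (m + ((k : ℝ) + 1) / 2) := by
  nlinarith [Real.pi_pos, (k.cast_nonneg : (0 : ℝ) ≤ k), (m.cast_nonneg : (0 : ℝ) ≤ m)]

lemma add_pi_mul_le_mul_succ :
    c + Real.pi * (m + ((k : ℝ) + 1) / 2) ≤ (c + Real.pi * (k + 1)) * (m + 1) := by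
  have hk : (0 : ℝ) ≤ k := k.cast_nonneg
  have hm : (0 : ℝ) ≤ m := m.cast_nonneg
  nlinarith [Real.pi_pos, mul_nonneg hc hm, mul_nonneg (mul_nonneg Real.pi_pos.le hk) hm,
    mul_nonneg Real.pi_pos.le hk]

end Denominator

open Nat in
/-- The partial sums `∑_{m=0}^{N} C(d+m-1, d-1) (c + π(m + d/2))^{-d}` grow like `log N`. -/
theorem partial_sums_log_growth (d : ℕ) (hd : 1 ≤ d) (c : ℝ) (hc : 0 ≤ c) :
    ∃ c₁ c₂ : ℝ, 0 < c₁ ∧ c₁ ≤ c₂ ∧ ∀ N : ℕ, 2 ≤ N →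
      c₁ * Real.log N ≤
        (∑ m ∈ Finset.range (N + 1),
          ((d + m - 1).choose (d - 1) : ℝ) * ((c + Real.pi * (m + (d : ℝ) / 2)) ^ d)⁻¹) ∧
      (∑ m ∈ Finset.range (N + 1),
          ((d + m - 1).choose (d - 1) : ℝ) * ((c + Real.pi * (m + (d : ℝ) / 2)) ^ d)⁻¹) ≤
        c₂ * Real.log N := by
  obtain ⟨k, rfl⟩ : ∃ k, d = k + 1 := ⟨d - 1, by omega⟩
  have hshift (m : ℕ) : k + 1 + m - 1 = k + m := by omega
  push_cast
  simp only [hshift]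
  refine exists_log_bounds_of_inv_succ_bounds
    (K := ((k ! : ℝ) * (c + Real.pi * (k + 1)) ^ (k + 1))⁻¹)
    (K' := ((k : ℝ) + 1) ^ k / (Real.pi / 2) ^ (k + 1)) (by positivity)
    (fun m => ?_) (fun m => ?_)
  · exact inv_succ_mul_le_choose_mul_inv_pow k m (by positivity) (add_pi_mul_le_mul_succ hc k m)
  · exact choose_mul_inv_pow_le_inv_succ k m (by positivity)
      (pi_div_two_mul_succ_le_add_pi_mul hc k m)
end

section
/- Let A be a diagonal operator on a separable Hilbert space with eigenvalues λ_m = (c + π(m + d/2))^{-1}, each occurring with multiplicity C(d+m-1, d-1), for m = 0,1,2,…, where c ≥ 0 and d ≥ 1. Then A^d lies in L^{1,∞} (i.e. its ordered eigenvalue partial sums are O(log N)), while A^{d-1} does not lie in L^{1,∞} when d ≥ 2. -/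
/-! The multiplicity `C(d+m-1, d-1)` is comparable to `(m+1)^(d-1)` and the eigenvalue
`λ_m = (c + π(m + d/2))⁻¹` to `(m+1)⁻¹`, so the weighted terms `C(d+m-1, d-1) λ_m^(d-1)` are
pinched between two positive constants. Multiplying by one more `λ_m` makes the terms of the
`d`-th power `O(1/(m+1))`, whose partial sums are dominated by harmonic numbers, hence `O(log N)`;
the partial sums of the `(d-1)`-st power grow linearly in `N`, and `log N = o(N)`. -/

open Filter Finset Asymptotics Real

theorem Nat.choose_sub_one_add_le_pow {d : ℕ} (hd : 1 ≤ d) (m : ℕ) :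
    (d + m - 1).choose (d - 1) ≤ (m + 1) ^ (d - 1) := by
  rw [show d + m - 1 = m + (d - 1) by omega]
  exact Nat.choose_add_le_add_one_pow m (d - 1)

theorem Nat.pow_div_factorial_le_choose_sub_one_add {d : ℕ} (hd : 1 ≤ d) (m : ℕ) :
    ((m : ℝ) + 1) ^ (d - 1) / (d - 1).factorial ≤ (d + m - 1).choose (d - 1) := by
  have h := Nat.pow_le_choose (α := ℝ) (d - 1) (d + m - 1)
  rwa [show d + m - 1 + 1 - (d - 1) = m + 1 by omega, Nat.cast_succ] at h

section Eigenvalue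

variable {c d m : ℝ}

theorem add_pi_mul_pos (hc : 0 ≤ c) (hd : 0 < d) (hm : 0 ≤ m) :
    0 < c + π * (m + d / 2) :=
  add_pos_of_nonneg_of_pos hc (mul_pos pi_pos (add_pos_of_nonneg_of_pos hm (half_pos hd)))

theorem succ_mul_inv_le_two_div_pi (hc : 0 ≤ c) (hd : 1 ≤ d) (hm : 0 ≤ m) :
    (m + 1) * (c + π * (m + d / 2))⁻¹ ≤ 2 / π := by
  have := pi_pos
  rw [← div_eq_mul_inv, div_le_div_iff₀ (add_pi_mul_pos hc (by linarith) hm) pi_pos]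
  nlinarith

theorem inv_le_succ_mul_inv (hc : 0 ≤ c) (hd : 1 ≤ d) (hm : 0 ≤ m) :
    (c + π * d)⁻¹ ≤ (m + 1) * (c + π * (m + d / 2))⁻¹ := by
  have := pi_pos
  rw [← div_eq_mul_inv, inv_eq_one_div,
    div_le_div_iff₀ (by positivity) (add_pi_mul_pos hc (by linarith) hm)]
  nlinarith [mul_nonneg hc hm, mul_nonneg (mul_nonneg pi_pos.le (sub_nonneg.2 hd)) hm]

end Eigenvalue

section Multiplicity

variable {c : ℝ} {d : ℕ}

theorem choose_mul_inv_pow_pred_le (hc : 0 ≤ c) (hd : 1 ≤ d) (m : ℕ) :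
    ((d + m - 1).choose (d - 1) : ℝ) * (c + π * (m + (d : ℝ) / 2))⁻¹ ^ (d - 1) ≤
      (2 / π) ^ (d - 1) := by
  have hd' : (1 : ℝ) ≤ d := by exact_mod_cast hd
  calc _ ≤ ((m : ℝ) + 1) ^ (d - 1) * (c + π * (m + (d : ℝ) / 2))⁻¹ ^ (d - 1) := by
        gcongr
        exact_mod_cast Nat.choose_sub_one_add_le_pow hd m
    _ = (((m : ℝ) + 1) * (c + π * (m + (d : ℝ) / 2))⁻¹) ^ (d - 1) := (mul_pow ..).symm
    _ ≤ _ := by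
        gcongr
        exact succ_mul_inv_le_two_div_pi hc hd' m.cast_nonneg

theorem inv_factorial_mul_pow_le_choose_mul_inv_pow_pred (hc : 0 ≤ c) (hd : 1 ≤ d) (m : ℕ) :
    ((d - 1).factorial * (c + π * d) ^ (d - 1) : ℝ)⁻¹ ≤
      ((d + m - 1).choose (d - 1) : ℝ) * (c + π * (m + (d : ℝ) / 2))⁻¹ ^ (d - 1) := by
  have hd' : (1 : ℝ) ≤ d := by exact_mod_cast hd
  calc ((d - 1).factorial * (c + π * d) ^ (d - 1) : ℝ)⁻¹
      = ((d - 1).factorial : ℝ)⁻¹ * (c + π * d)⁻¹ ^ (d - 1) := by rw [mul_inv, inv_pow]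
    _ ≤ ((d - 1).factorial : ℝ)⁻¹ *
        (((m : ℝ) + 1) * (c + π * (m + (d : ℝ) / 2))⁻¹) ^ (d - 1) := by
        gcongr
        exact inv_le_succ_mul_inv hc hd' m.cast_nonneg
    _ = ((m : ℝ) + 1) ^ (d - 1) / (d - 1).factorial *
        (c + π * (m + (d : ℝ) / 2))⁻¹ ^ (d - 1) := by
        rw [mul_pow]
        ring
    _ ≤ _ := by
        gcongr
        exact Nat.pow_div_factorial_le_choose_sub_one_add hd m

theorem choose_mul_inv_pow_le (hc : 0 ≤ c) (hd : 1 ≤ d) (m : ℕ) :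
    ((d + m - 1).choose (d - 1) : ℝ) * (c + π * (m + (d : ℝ) / 2))⁻¹ ^ d ≤
      (2 / π) ^ d * ((m : ℝ) + 1)⁻¹ := by
  have hd' : (1 : ℝ) ≤ d := by exact_mod_cast hd
  rw [← div_eq_mul_inv, le_div_iff₀ (by positivity), ← pow_sub_one_mul (by omega : d ≠ 0),
    ← pow_sub_one_mul (by omega : d ≠ 0)]
  calc _ = ((d + m - 1).choose (d - 1) : ℝ) * (c + π * (m + (d : ℝ) / 2))⁻¹ ^ (d - 1) *
        (((m : ℝ) + 1) * (c + π * (m + (d : ℝ) / 2))⁻¹) := by ring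
    _ ≤ _ := by
        gcongr
        · exact choose_mul_inv_pow_pred_le hc hd m
        · exact succ_mul_inv_le_two_div_pi hc hd' m.cast_nonneg

end Multiplicity

theorem isBigO_harmonic_succ_log :
    (fun N : ℕ => (harmonic (N + 1) : ℝ)) =O[atTop] fun N => log N := by
  have hconst : (fun _ : ℕ => (2 : ℝ)) =O[atTop] fun N => log N :=
    (isLittleO_const_log_atTop.comp_tendsto tendsto_natCast_atTop_atTop).isBigO
  refine IsBigO.trans ?_ (hconst.add (isBigO_refl _ _))
  refine IsBigO.of_bound 1 (Eventually.of_forall fun N => ?_)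
  have hH := harmonic_le_one_add_log N
  have hlog := log_natCast_nonneg N
  have hinv : ((N : ℝ) + 1)⁻¹ ≤ 1 := inv_le_one_of_one_le₀ (by linarith [N.cast_nonneg (α := ℝ)])
  have hH0 : (0 : ℝ) ≤ harmonic (N + 1) := mod_cast (harmonic_pos N.succ_ne_zero).le
  rw [one_mul, norm_of_nonneg hH0, norm_of_nonneg (by positivity), harmonic_succ]
  push_cast
  linarith

theorem isBigO_log_of_norm_le_mul_inv_succ {E : Type*} [SeminormedAddCommGroup E] {f : ℕ → E}
    {K : ℝ} (hf : ∀ m, ‖f m‖ ≤ K * ((m : ℝ) + 1)⁻¹) :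
    (fun N => ∑ m ∈ range (N + 1), f m) =O[atTop] fun N => log N := by
  refine IsBigO.trans (IsBigO.of_bound K (Eventually.of_forall fun N => ?_))
    isBigO_harmonic_succ_log
  calc ‖∑ m ∈ range (N + 1), f m‖ ≤ ∑ m ∈ range (N + 1), ‖f m‖ := norm_sum_le _ _
    _ ≤ ∑ m ∈ range (N + 1), K * ((m : ℝ) + 1)⁻¹ := sum_le_sum fun m _ => hf m
    _ = K * ‖(harmonic (N + 1) : ℝ)‖ := by
        rw [← mul_sum, norm_of_nonneg (mod_cast (harmonic_pos N.succ_ne_zero).le), harmonic]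
        push_cast
        rfl

theorem not_isBigO_log_of_const_le {f : ℕ → ℝ} {K : ℝ} (hK : 0 < K) (hf : ∀ m, K ≤ f m) :
    ¬ (fun N => ∑ m ∈ range (N + 1), f m) =O[atTop] fun N => log N := by
  intro h
  have hid : (fun N : ℕ => (N : ℝ)) =O[atTop] fun N => ∑ m ∈ range (N + 1), f m := by
    refine IsBigO.of_bound K⁻¹ (Eventually.of_forall fun N => ?_)
    have hsum : K * (N + 1) ≤ ∑ m ∈ range (N + 1), f m := by
      simpa [mul_comm] using card_nsmul_le_sum (range (N + 1)) f K fun m _ => hf m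
    rw [norm_of_nonneg N.cast_nonneg, norm_of_nonneg (by nlinarith [N.cast_nonneg (α := ℝ)]),
      ← div_eq_inv_mul, le_div_iff₀ hK]
    linarith
  refine isLittleO_irrefl (frequently_atTop.2 fun N => ⟨N + 1, by omega, by positivity⟩)
    ((hid.trans h).trans_isLittleO
      (isLittleO_log_id_atTop.comp_tendsto tendsto_natCast_atTop_atTop))

/-- For the diagonal operator with eigenvalues `λ_m = (c+π(m+d/2))⁻¹` of multiplicity
`C(d+m-1,d-1)`, the `d`-th power is in the Macaev ideal `L^{1,∞}` (partial sums of the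
eigenvalues, with multiplicity, are `O(log N)`), while the `(d-1)`-st power is not when
`d ≥ 2`. -/
theorem diagonal_power_macaev (d : ℕ) (hd : 1 ≤ d) (c : ℝ) (hc : 0 ≤ c) :
    ((fun N : ℕ => ∑ m ∈ Finset.range (N + 1),
        ((d + m - 1).choose (d - 1) : ℝ) * ((c + Real.pi * (m + (d : ℝ) / 2))⁻¹) ^ d)
      =O[atTop] fun N : ℕ => Real.log N) ∧
    (2 ≤ d → ¬ ((fun N : ℕ => ∑ m ∈ Finset.range (N + 1),
        ((d + m - 1).choose (d - 1) : ℝ) * ((c + Real.pi * (m + (d : ℝ) / 2))⁻¹) ^ (d - 1))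
      =O[atTop] fun N : ℕ => Real.log N)) := by
  refine ⟨isBigO_log_of_norm_le_mul_inv_succ (K := (2 / π) ^ d) fun m => ?_, fun _ =>
    not_isBigO_log_of_const_le (by positivity)
      (inv_factorial_mul_pow_le_choose_mul_inv_pow_pred hc hd)⟩
  rw [norm_of_nonneg (by positivity)]
  exact choose_mul_inv_pow_le hc hd m
end

section
/- The symplectic Fourier transform F̂(w') = 2^{-d} ∫_{ℂ^d} F(w) e^{π i Im(w'·w̄)} dm(w) and symplectic convolution (F∗G)(w) = ∫_{ℂ^d} F(z) G(w-z) e^{π i Im(w·z̄)} dm(z) satisfy, for Schwartz functions F and G on ℂ^d, the identity (F ∗ G)^ = F ∗ Ĝ. -/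
open MeasureTheory Complex

/-- The symplectic Fourier transform
`F̂(w') = 2^{-d} ∫ F(w) e^{π i Im(w'·w̄)} dm(w)`. -/
noncomputable def sympFourier (d : ℕ) (F : (Fin d → ℂ) → ℂ) (w' : Fin d → ℂ) : ℂ :=
  (2 : ℂ) ^ (-(d : ℤ)) *
    ∫ w : Fin d → ℂ,
      F w * Complex.exp ((Real.pi : ℂ) * Complex.I *
        ((∑ j, w' j * (starRingEnd ℂ) (w j)).im : ℝ)) ∂volume

/-- The symplectic convolution
`(F∗G)(w) = ∫ F(z) G(w−z) e^{π i Im(w·z̄)} dm(z)`. -/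
noncomputable def sympConv (d : ℕ) (F G : (Fin d → ℂ) → ℂ) (w : Fin d → ℂ) : ℂ :=
  ∫ z : Fin d → ℂ,
    F z * G (w - z) * Complex.exp ((Real.pi : ℂ) * Complex.I *
      ((∑ j, w j * (starRingEnd ℂ) (z j)).im : ℝ)) ∂volume

/-!
Fubini turns `(F ∗ G)^(w')` into
`2^{-d} ∫∫ F(z) G(w - z) e^{πiω(w,z)} e^{πiω(w',w)} dw dz`,
where `ω(a, b) = Im(a·b̄)` is the standard symplectic form on `ℂ^d`. Substituting `w = u + z`
and using that `ω` is bilinear and alternating, the phase factors as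
`e^{πiω(w' - z, u)} e^{πiω(w', z)}`, and the inner integral over `u` is then `2^d Ĝ(w' - z)`.
-/

namespace SympFourier

variable {d : ℕ}

noncomputable def sympForm (a b : Fin d → ℂ) : ℝ :=
  (∑ j, a j * (starRingEnd ℂ) (b j)).im

noncomputable def sympPhase (a b : Fin d → ℂ) : ℂ :=
  exp (Real.pi * I * sympForm a b)

theorem sympForm_add_left_add_sympForm (u z w' : Fin d → ℂ) :
    sympForm (u + z) z + sympForm w' (u + z) = sympForm (w' - z) u + sympForm w' z := by
  simp only [sympForm, Pi.add_apply, Pi.sub_apply, im_sum, ← Finset.sum_add_distrib]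
  refine Finset.sum_congr rfl fun j _ => ?_
  simp only [map_add, add_mul, sub_mul, mul_add, add_im, sub_im, mul_im, conj_re, conj_im]
  ring

theorem sympPhase_add_left_mul_sympPhase (u z w' : Fin d → ℂ) :
    sympPhase (u + z) z * sympPhase w' (u + z) = sympPhase (w' - z) u * sympPhase w' z := by
  simp only [sympPhase, ← exp_add, ← mul_add, ← ofReal_add,
    sympForm_add_left_add_sympForm]

theorem norm_sympPhase (a b : Fin d → ℂ) : ‖sympPhase a b‖ = 1 := by
  simp [sympPhase, norm_exp, mul_re]

theorem continuous_sympPhase :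
    Continuous fun p : (Fin d → ℂ) × (Fin d → ℂ) => sympPhase p.1 p.2 := by
  unfold sympPhase sympForm
  fun_prop

theorem sympConv_apply (F G : (Fin d → ℂ) → ℂ) (w : Fin d → ℂ) :
    sympConv d F G w = ∫ z, F z * G (w - z) * sympPhase w z := rfl

theorem sympFourier_apply (F : (Fin d → ℂ) → ℂ) (w' : Fin d → ℂ) :
    sympFourier d F w' = (2 : ℂ) ^ (-(d : ℤ)) * ∫ w, F w * sympPhase w' w := rfl

theorem integrable_sympConv_integrand_mul_sympPhase {F G : (Fin d → ℂ) → ℂ}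
    (hF : Integrable F) (hG : Integrable G) (w' : Fin d → ℂ) :
    Integrable (fun p : (Fin d → ℂ) × (Fin d → ℂ) =>
      F p.2 * G (p.1 - p.2) * sympPhase p.1 p.2 * sympPhase w' p.1) (volume.prod volume) := by
  have hphase : Continuous fun p : (Fin d → ℂ) × (Fin d → ℂ) =>
      sympPhase p.1 p.2 * sympPhase w' p.1 :=
    continuous_sympPhase.mul (continuous_sympPhase.comp (continuous_const.prodMk continuous_fst))
  simpa only [ContinuousLinearMap.mul_apply', mul_assoc] using
    (hF.convolution_integrand (ContinuousLinearMap.mul ℂ ℂ) hG).mul_bdd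
      hphase.aestronglyMeasurable (c := 1)
      (Filter.Eventually.of_forall fun p => by simp [norm_sympPhase])

theorem integral_sympConv_integrand_mul_sympPhase (F G : (Fin d → ℂ) → ℂ)
    (z w' : Fin d → ℂ) :
    ∫ w, F z * G (w - z) * sympPhase w z * sympPhase w' w
      = F z * sympPhase w' z * ∫ u, G u * sympPhase (w' - z) u := by
  rw [← integral_add_right_eq_self _ z, ← integral_const_mul]
  congr 1 with u
  rw [add_sub_cancel_right, mul_assoc _ (sympPhase _ _), sympPhase_add_left_mul_sympPhase]
  ring

theorem sympFourier_sympConv_of_integrable {F G : (Fin d → ℂ) → ℂ}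
    (hF : Integrable F) (hG : Integrable G) :
    sympFourier d (sympConv d F G) = sympConv d F (sympFourier d G) := by
  funext w'
  calc sympFourier d (sympConv d F G) w'
      = (2 : ℂ) ^ (-(d : ℤ)) *
          ∫ w, ∫ z, F z * G (w - z) * sympPhase w z * sympPhase w' w := by
        simp only [sympFourier_apply, sympConv_apply, integral_mul_const]
    _ = (2 : ℂ) ^ (-(d : ℤ)) *
          ∫ z, ∫ w, F z * G (w - z) * sympPhase w z * sympPhase w' w := by
        rw [integral_integral_swap (integrable_sympConv_integrand_mul_sympPhase hF hG w')]
    _ = sympConv d F (sympFourier d G) w' := by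
        simp only [integral_sympConv_integrand_mul_sympPhase, sympConv_apply, sympFourier_apply]
        rw [← integral_const_mul]
        congr 1 with z
        ring

end SympFourier

/-- For Schwartz functions `F, G` on `ℂ^d`, `(F ∗ G)^ = F ∗ Ĝ`. -/
theorem sympFourier_sympConv (d : ℕ)
    (F G : SchwartzMap (Fin d → ℂ) ℂ) :
    sympFourier d (sympConv d (⇑F) (⇑G)) = sympConv d (⇑F) (sympFourier d (⇑G)) :=
  SympFourier.sympFourier_sympConv_of_integrable F.integrable G.integrable
end
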